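/- Let n ≥ 2 and let σ ≤ τ in P_n^* be wire diagrams with S(σ) = S(τ). Then for every cover relation x ⋖ y in P_n^* with σ ≤ x ⋖ y ≤ τ, the step from x to y is a nesting uncrossing of a crossing of x, and S(x) = S(y). -/

import Mathlib

open Equiv Finset

/-- A candidate wire diagram: a permutation of the `2 n` endpoint positions. -/
abbrev WDperm (n : ℕ) := Equiv.Perm (Fin (2 * n))

/-- `σ` is a wire diagram on `n` wires: a fixed-point-free involution of the `2 n` positions. -/
def IsWD {n : ℕ} (σ : WDperm n) : Prop := (∀ x, σ (σ x) = x) ∧ ∀ x, σ x ≠ x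

instance IsWD.decPred {n : ℕ} : DecidablePred (@IsWD n) := fun σ => by
  unfold IsWD; infer_instance

/-- Positions `a < c` are first endpoints of a pair of crossing wires `{a, σ a}`, `{c, σ c}`,
i.e. `a < c < σ a < σ c`. -/
def IsCrossing {n : ℕ} (σ : WDperm n) (a c : Fin (2 * n)) : Prop :=
  a < c ∧ c < σ a ∧ σ a < σ c

instance IsCrossing.dec {n : ℕ} (σ : WDperm n) (a c : Fin (2 * n)) :
    Decidable (IsCrossing σ a c) := by unfold IsCrossing; infer_instance

/-- The number `c(σ)` of crossings of `σ`. -/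
def ncross {n : ℕ} (σ : WDperm n) : ℕ :=
  (Finset.univ.filter (fun p : Fin (2 * n) × Fin (2 * n) => IsCrossing σ p.1 p.2)).card

/-- The nesting uncrossing of the crossing `{a, σ a}, {c, σ c}` (with `a < c < σ a < σ c`):
replace the pairs `{a,b},{c,d}` by `{a,d},{b,c}` where `b = σ a`, `d = σ c`. -/
def nestU {n : ℕ} (σ : WDperm n) (a c : Fin (2 * n)) : WDperm n :=
  Equiv.swap (σ a) (σ c) * σ * Equiv.swap (σ a) (σ c)

/-- The disjoint uncrossing: replace the pairs `{a,b},{c,d}` by `{a,c},{b,d}`. -/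
def disjU {n : ℕ} (σ : WDperm n) (a c : Fin (2 * n)) : WDperm n :=
  Equiv.swap (σ a) c * σ * Equiv.swap (σ a) c

/-- `τ` is obtained from `σ` by a nesting uncrossing of some crossing of `σ`. -/
def IsNestStep {n : ℕ} (σ τ : WDperm n) : Prop := ∃ a c, IsCrossing σ a c ∧ τ = nestU σ a c

/-- `τ` is obtained from `σ` by a disjoint uncrossing of some crossing of `σ`. -/
def IsDisjStep {n : ℕ} (σ τ : WDperm n) : Prop := ∃ a c, IsCrossing σ a c ∧ τ = disjU σ a c

/-- `τ` is obtained from `σ` by an uncrossing step that decreases the crossing number by one. -/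
def UncCov {n : ℕ} (σ τ : WDperm n) : Prop :=
  (IsNestStep σ τ ∨ IsDisjStep σ τ) ∧ ncross τ + 1 = ncross σ

/-- The dual uncrossing poset `P_n^*`: wire diagrams together with a top element `none = 1̂`
(the adjoined element `0̂` of `P_n`). -/
abbrev PStar (n : ℕ) := Option {σ : WDperm n // IsWD σ}

/-- The covering relation of `P_n^*`. -/
def Cov {n : ℕ} : PStar n → PStar n → Prop
  | some σ, some τ => UncCov σ.1 τ.1
  | some σ, none => ncross σ.1 = 0
  | none, _ => False

/-- The partial order of `P_n^*`: reflexive-transitive closure of the covering relation. -/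
def ple {n : ℕ} : PStar n → PStar n → Prop := Relation.ReflTransGen Cov

/-- The (0-indexed) name `w(σ)(x)` of the wire through position `x`: the number of wires whose
first endpoint is strictly smaller than the first endpoint of the wire through `x`. -/
def word {n : ℕ} (σ : WDperm n) (x : Fin (2 * n)) : ℕ :=
  (Finset.univ.filter (fun a : Fin (2 * n) => a < σ a ∧ a < min x (σ x))).card

/-- The start set `S(σ)`: the set of first endpoints of wires of `σ`. -/
def startSet {n : ℕ} (σ : WDperm n) : Finset (Fin (2 * n)) :=
  Finset.univ.filter (fun a => a < σ a)

/-- The noncrossing pair set `N(σ)` (on 0-indexed wire names): `(i, j)` with `i < j` for each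
nested pair of wires `i < j`, and `(j, i)` for each disjoint pair of wires `i < j`. -/
def NPairs {n : ℕ} (σ : WDperm n) : Set (ℕ × ℕ) :=
  {p | ∃ a c : Fin (2 * n), a < σ a ∧ c < σ c ∧ a < c ∧
        ((σ c < σ a ∧ p = (word σ a, word σ c)) ∨ (σ a < c ∧ p = (word σ c, word σ a)))}

/-- Lexicographic comparison of finsets via their increasing enumerations. -/
def finsetLexLE {m : ℕ} (A B : Finset (Fin m)) : Prop :=
  A = B ∨ List.Lex (· < ·) (A.sort (· ≤ ·)) (B.sort (· ≤ ·))

/-- Labels of the edge labeling: ordered pairs of (0-indexed) wire names, and a label `L`. -/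
inductive Lbl where
  | pair : ℕ → ℕ → Lbl
  | L : Lbl
deriving DecidableEq

/-- The total order `<λ` on labels. -/
def lblLT : Lbl → Lbl → Prop
  | .pair i j, .pair i' j' =>
      if i < j then (if i' < j' then i < i' ∨ (i = i' ∧ j < j') else True)
      else (if i' < j' then False else (j' < j ∨ (j = j' ∧ i' < i)))
  | .pair i j, .L => i < j
  | .L, .pair r s => s < r
  | .L, .L => False

/-- `≤λ` on labels. -/
def lblLE (p q : Lbl) : Prop := p = q ∨ lblLT p q

/-- The sorted list of positions where `σ` and `τ` differ. -/
def diffList {n : ℕ} (σ τ : WDperm n) : List (Fin (2 * n)) :=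
  (Finset.univ.filter (fun x => σ x ≠ τ x)).sort (· ≤ ·)

/-- The edge labeling `λ` of `P_n^*`: an uncrossing of the crossing formed by wires `k < m`
of the lower diagram gets label `(k, m)` if it is the nesting uncrossing and `(m, k)` if it is
the disjoint uncrossing; covers of the top element `1̂ = none` get the label `L`. -/
def lbl {n : ℕ} : PStar n → PStar n → Lbl
  | some σ, some τ =>
      match (diffList σ.1 τ.1)[0]?, (diffList σ.1 τ.1)[1]? with
      | some a, some c =>
          if τ.1 a = σ.1 c then Lbl.pair (word σ.1 a) (word σ.1 c)
          else Lbl.pair (word σ.1 c) (word σ.1 a)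
      | _, _ => Lbl.L
  | _, _ => Lbl.L

/-- `c` is a saturated chain from `u` to `v` in `P_n^*`. -/
def SatChain {n : ℕ} (c : List (PStar n)) (u v : PStar n) : Prop :=
  c.Chain' Cov ∧ c.head? = some u ∧ c.getLast? = some v

/-- The label sequence of a saturated chain. -/
def chainLabels {n : ℕ} (c : List (PStar n)) : List Lbl := c.zipWith lbl c.tail

/-- Lexicographic order on pairs of labels. -/
def pairLexLT (p q : Lbl × Lbl) : Prop := lblLT p.1 q.1 ∨ (p.1 = q.1 ∧ lblLT p.2 q.2)

/-- `x ⋖ y ⋖ z` is a topological ascent: its label pair is lexicographically strictly smaller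
than the label pair of every other saturated chain from `x` to `z`. -/
def TopAscent {n : ℕ} (x y z : PStar n) : Prop :=
  Cov x y ∧ Cov y z ∧ ∀ y' : PStar n, Cov x y' → Cov y' z → y' ≠ y →
    pairLexLT (lbl x y, lbl y z) (lbl x y', lbl y' z)

/-- `x ⋖ y ⋖ z` is a topological descent: a length-two chain that is not a topological ascent. -/
def TopDescent {n : ℕ} (x y z : PStar n) : Prop := Cov x y ∧ Cov y z ∧ ¬ TopAscent x y z

/-- Every length-two subchain of `c` is a topological ascent. -/
def AllTopAscents {n : ℕ} (c : List (PStar n)) : Prop :=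
  ∀ x y z : PStar n, [x, y, z] <:+: c → TopAscent x y z

/-- The number of inversions of a permutation. -/
def numInv {n : ℕ} (π : Equiv.Perm (Fin n)) : ℕ :=
  (Finset.univ.filter (fun p : Fin n × Fin n => p.1 < p.2 ∧ π p.2 < π p.1)).card

/-- One step of the Bruhat order: left multiplication by a transposition raising `inv` by one. -/
def BruhatStep {n : ℕ} (u v : Equiv.Perm (Fin n)) : Prop :=
  (∃ a b : Fin n, a ≠ b ∧ v = Equiv.swap a b * u) ∧ numInv v = numInv u + 1

/-- The Bruhat order on `S_n`. -/
def BruhatLE {n : ℕ} : Equiv.Perm (Fin n) → Equiv.Perm (Fin n) → Prop :=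
  Relation.ReflTransGen BruhatStep

/-- The set of second endpoints of wires of `σ`. -/
def secondEnds {n : ℕ} (σ : WDperm n) : Finset (Fin (2 * n)) :=
  Finset.univ.filter (fun b => σ b < b)

/-- The wire name at the `t`-th (0-indexed) second endpoint. -/
def piVal {n : ℕ} (σ : WDperm n) (t : ℕ) : ℕ :=
  (((secondEnds σ).sort (· ≤ ·))[t]?).elim 0 (word σ)

open Classical in
/-- The permutation `π(σ) ∈ S_n` reading the wire names at the second endpoints of `σ` in
increasing order of position. -/
noncomputable def piPerm {n : ℕ} (σ : WDperm n) : Equiv.Perm (Fin n) :=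
  if h : Function.Bijective (fun t : Fin n =>
      if ht : piVal σ (t : ℕ) < n then (⟨piVal σ (t : ℕ), ht⟩ : Fin n) else t)
  then Equiv.ofBijective _ h else 1

/-- Apply to the crossing at `(a, c)` the nesting (`nest = true`) or disjoint (`nest = false`)
uncrossing. -/
def uncrossAt {n : ℕ} (σ : WDperm n) (a c : Fin (2 * n)) (nest : Bool) : WDperm n :=
  if nest then nestU σ a c else disjU σ a c

/-!
A nesting uncrossing of a crossing `a < c < b < d` keeps the start set, while the disjoint one
replaces the start `c` by `b > c`. Hence the sum of the start positions is weakly increasing along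
`P_n^*` and strictly increasing across a disjoint uncrossing. As `S(σ) = S(τ)`, this sum is
constant on `[σ, τ]`, so no step inside the interval is a disjoint uncrossing.
-/

section Uncrossing

variable {n : ℕ} {σ : WDperm n} {a c : Fin (2 * n)}

theorem nestU_apply (hσ : Function.Involutive σ) (h : IsCrossing σ a c) (p : Fin (2 * n)) :
    nestU σ a c p =
      if p = a then σ c else if p = σ a then c else if p = c then σ a
      else if p = σ c then a else σ p := by
  obtain ⟨hac, hcb, hbd⟩ := h
  have := hσ a
  have := hσ c
  simp only [nestU, Perm.mul_apply, swap_apply_def]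
  split_ifs <;> grind [Equiv.apply_eq_iff_eq]

theorem disjU_apply (hσ : Function.Involutive σ) (h : IsCrossing σ a c) (p : Fin (2 * n)) :
    disjU σ a c p =
      if p = a then c else if p = σ a then σ c else if p = c then a
      else if p = σ c then σ a else σ p := by
  obtain ⟨hac, hcb, hbd⟩ := h
  have := hσ a
  have := hσ c
  simp only [disjU, Perm.mul_apply, swap_apply_def]
  split_ifs <;> grind [Equiv.apply_eq_iff_eq]

theorem startSet_nestU (hσ : Function.Involutive σ) (h : IsCrossing σ a c) :
    startSet (nestU σ a c) = startSet σ := by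
  ext p
  simp only [startSet, mem_filter, mem_univ, true_and, nestU_apply hσ h]
  obtain ⟨hac, hcb, hbd⟩ := h
  have := hσ a
  have := hσ c
  split_ifs <;> grind

theorem startSet_disjU (hσ : Function.Involutive σ) (h : IsCrossing σ a c) :
    startSet (disjU σ a c) = insert (σ a) ((startSet σ).erase c) := by
  ext p
  simp only [startSet, mem_filter, mem_univ, true_and, mem_insert, mem_erase, disjU_apply hσ h]
  obtain ⟨hac, hcb, hbd⟩ := h
  have := hσ a
  have := hσ c
  split_ifs <;> grind

def startSum (σ : WDperm n) : ℕ := ∑ p ∈ startSet σ, (p : ℕ)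

theorem startSum_lt_startSum_disjU (hσ : Function.Involutive σ) (h : IsCrossing σ a c) :
    startSum σ < startSum (disjU σ a c) := by
  obtain ⟨hac, hcb, hbd⟩ := h
  have hc : c ∈ startSet σ := by simpa [startSet] using hcb.trans hbd
  have hb : σ a ∉ (startSet σ).erase c := by
    simp only [startSet, mem_erase, mem_filter, mem_univ, true_and, hσ a, not_and, not_lt]
    exact fun _ => (hac.trans hcb).le
  rw [startSum, startSum, startSet_disjU hσ ⟨hac, hcb, hbd⟩, sum_insert hb,
    ← add_sum_erase _ _ hc]
  exact Nat.add_lt_add_right hcb _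

theorem startSum_le_of_uncCov {τ : WDperm n} (hσ : Function.Involutive σ) (h : UncCov σ τ) :
    startSum σ ≤ startSum τ := by
  obtain ⟨⟨a, c, hc, rfl⟩ | ⟨a, c, hc, rfl⟩, -⟩ := h
  · rw [startSum, startSum, startSet_nestU hσ hc]
  · exact (startSum_lt_startSum_disjU hσ hc).le

theorem startSum_le_of_ple {x y : {σ : WDperm n // IsWD σ}} (h : ple (some x) (some y)) :
    startSum x.1 ≤ startSum y.1 := by
  let f : PStar n → WithTop ℕ := fun u => u.elim ⊤ fun σ => startSum σ.1
  have hf : ∀ u v, Cov u v → f u ≤ f v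
    | some u, some _, h => WithTop.coe_le_coe.2 (startSum_le_of_uncCov u.2.1 h)
    | some _, none, _ => le_top
  have hfxy := Relation.ReflTransGen.lift f hf _ _ h
  rw [Relation.reflTransGen_eq_self] at hfxy
  exact WithTop.coe_le_coe.1 hfxy

end Uncrossing

theorem interval_same_startSet_steps_nesting_general (n : ℕ)
    (σ τ x y : {σ : WDperm n // IsWD σ})
    (hS : startSet σ.1 = startSet τ.1)
    (hσx : ple (some σ) (some x)) (hxy : Cov (some x) (some y))
    (hyτ : ple (some y) (some τ)) :
    IsNestStep x.1 y.1 ∧ startSet x.1 = startSet y.1 := by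
  obtain ⟨⟨a, c, hc, hy⟩ | ⟨a, c, hc, hy⟩, -⟩ := hxy
  · exact ⟨⟨a, c, hc, hy⟩, by rw [hy, startSet_nestU x.2.1 hc]⟩
  · have hστ : startSum σ.1 = startSum τ.1 := by rw [startSum, startSum, hS]
    have hxy : startSum x.1 < startSum y.1 := hy ▸ startSum_lt_startSum_disjU x.2.1 hc
    have := startSum_le_of_ple hσx
    have := startSum_le_of_ple hyτ
    omega

/-- If `σ ≤ τ` in `P_n^*` with `S(σ) = S(τ)`, then every cover step `x ⋖ y` inside the
interval `[σ, τ]` is a nesting uncrossing, and it preserves the start set. -/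
theorem interval_same_startSet_steps_nesting (n : ℕ) (hn : 2 ≤ n)
    (σ τ x y : {σ : WDperm n // IsWD σ})
    (hστ : ple (some σ) (some τ)) (hS : startSet σ.1 = startSet τ.1)
    (hσx : ple (some σ) (some x)) (hxy : Cov (some x) (some y))
    (hyτ : ple (some y) (some τ)) :
    IsNestStep x.1 y.1 ∧ startSet x.1 = startSet y.1 :=
  interval_same_startSet_steps_nesting_general n σ τ x y hS hσx hxy hyτ
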